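/- Let α be a real number, let N be an odd positive integer, let k be an even positive integer, let m be an odd integer, and let δ ∈ (0,1) be such that ‖Nα − m/k‖ < (1−δ)/(kN). If ε : ℕ → ℝ satisfies ε(n) ≤ δ/(2k) for all n, then N is not the sum of two elements of A(ε,α); that is, there do not exist n₁, n₂ ∈ A(ε,α) with n₁ + n₂ = N. -/

import Mathlib

open Filter

/-- Distance to the nearest integer. -/
noncomputable def fpa (t : ℝ) : ℝ := |t - round t|

/-- `A ε α = {n ∈ ℕ : ‖α n²‖ ≤ ε n}`. -/
def A (ε : ℕ → ℝ) (α : ℝ) : Set ℕ := {n : ℕ | fpa (α * (n : ℝ) ^ 2) ≤ ε n}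

/-!
If `n₁ + n₂ = N`, then `α n₂² - α n₁² = c · Nα` with `c = n₂ - n₁` odd and `|c| ≤ N`, so
`c m / k = α n₂² - α n₁² - c (Nα - m/k)`. Since `‖·‖` is the norm of `ℝ/ℤ`, the right side is
within `δ/(2k) + δ/(2k) + N (1-δ)/(kN) = 1/k` of an integer, strictly. But `c m` is odd and `k`
even, so `c m / k` is at distance at least `1/k` from every integer.
-/

theorem fpa_eq_norm (t : ℝ) : fpa t = ‖(t : UnitAddCircle)‖ := UnitAddCircle.norm_eq.symm

theorem fpa_nonneg (t : ℝ) : 0 ≤ fpa t := abs_nonneg _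

theorem fpa_sub_le (x y : ℝ) : fpa (x - y) ≤ fpa x + fpa y := by
  simpa only [fpa_eq_norm, AddCircle.coe_sub] using norm_sub_le (x : UnitAddCircle) y

theorem fpa_intCast_mul_le (c : ℤ) (x : ℝ) : fpa (c * x) ≤ |c| * fpa x := by
  simpa only [fpa_eq_norm, ← zsmul_eq_mul, AddCircle.coe_zsmul, Int.norm_eq_abs, Int.cast_abs]
    using norm_zsmul_le c (x : UnitAddCircle)

theorem inv_le_fpa_div_of_odd_of_even {a : ℤ} {k : ℕ} (ha : Odd a) (hk : Even k) :
    (k : ℝ)⁻¹ ≤ fpa (a / k) := by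
  rcases k.eq_zero_or_pos with rfl | hk0
  · simpa using fpa_nonneg _
  have hk0' : (0 : ℝ) < k := by exact_mod_cast hk0
  set j := round ((a : ℝ) / k)
  have hodd : Odd (a - k * j) := ha.sub_even ((Int.even_coe_nat k).2 hk |>.mul_right j)
  have hone : (1 : ℝ) ≤ |((a - k * j : ℤ) : ℝ)| := by
    exact_mod_cast Int.one_le_abs (fun h => by simp [h] at hodd)
  have hscale : (a : ℝ) / k - j = ((a - k * j : ℤ) : ℝ) / k := by
    push_cast
    field_simp
  rw [fpa, hscale, abs_div, abs_of_pos hk0', inv_eq_one_div]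
  gcongr

theorem stmt_0_general (α : ℝ) (N k : ℕ) (m : ℤ) (δ : ℝ)
    (hNodd : Odd N) (hkeven : Even k) (hmodd : Odd m)
    (happrox : fpa ((N : ℝ) * α - (m : ℝ) / (k : ℝ)) < (1 - δ) / ((k : ℝ) * (N : ℝ)))
    (ε : ℕ → ℝ) (hε : ∀ n, ε n ≤ δ / (2 * (k : ℝ))) :
    ¬ ∃ n₁ ∈ A ε α, ∃ n₂ ∈ A ε α, n₁ + n₂ = N := by
  rintro ⟨n₁, h₁, n₂, h₂, hsum⟩
  set c : ℤ := n₂ - n₁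
  have hc_odd : Odd c := by
    rw [show c = N - 2 * n₁ by omega]
    exact (Int.odd_coe_nat N |>.2 hNodd).sub_even (even_two_mul _)
  have hc_le : |(c : ℝ)| ≤ N := by exact_mod_cast abs_le.2 ⟨by omega, by omega⟩
  have hN0 : (0 : ℝ) < N := by exact_mod_cast hNodd.pos
  have hsplit : ((c * m : ℤ) : ℝ) / k
      = α * n₂ ^ 2 - α * n₁ ^ 2 - c * (N * α - m / k) := by
    have : (N : ℝ) = n₁ + n₂ := by exact_mod_cast hsum.symm
    simp only [c, this]
    push_cast
    ring
  have hfar := inv_le_fpa_div_of_odd_of_even (hc_odd.mul hmodd) hkeven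
  have hnear : |(c : ℝ)| * fpa (N * α - m / k) < (1 - δ) / k := by
    calc |(c : ℝ)| * fpa (N * α - m / k) ≤ N * fpa (N * α - m / k) := by
          gcongr; exact fpa_nonneg _
      _ < N * ((1 - δ) / (k * N)) := by gcongr
      _ = (1 - δ) / k := by field_simp
  refine lt_irrefl (k : ℝ)⁻¹ ?_
  calc (k : ℝ)⁻¹ ≤ fpa (α * n₂ ^ 2 - α * n₁ ^ 2 - c * (N * α - m / k)) := hsplit ▸ hfar
    _ ≤ fpa (α * n₂ ^ 2) + fpa (α * n₁ ^ 2) + |(c : ℝ)| * fpa (N * α - m / k) := by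
        refine (fpa_sub_le _ _).trans ?_
        gcongr
        · exact fpa_sub_le _ _
        · exact_mod_cast fpa_intCast_mul_le c _
    _ < δ / (2 * k) + δ / (2 * k) + (1 - δ) / k :=
        add_lt_add_of_le_of_lt (add_le_add (h₂.trans (hε n₂)) (h₁.trans (hε n₁))) hnear
    _ = (k : ℝ)⁻¹ := by ring

theorem stmt_0 (α : ℝ) (N k : ℕ) (m : ℤ) (δ : ℝ)
    (hN : 0 < N) (hNodd : Odd N) (hk : 0 < k) (hkeven : Even k) (hmodd : Odd m)
    (hδ : δ ∈ Set.Ioo (0 : ℝ) 1)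
    (happrox : fpa ((N : ℝ) * α - (m : ℝ) / (k : ℝ)) < (1 - δ) / ((k : ℝ) * (N : ℝ)))
    (ε : ℕ → ℝ) (hε : ∀ n, ε n ≤ δ / (2 * (k : ℝ))) :
    ¬ ∃ n₁ ∈ A ε α, ∃ n₂ ∈ A ε α, n₁ + n₂ = N :=
  stmt_0_general α N k m δ hNodd hkeven hmodd happrox ε hε
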